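/- arXiv:2201.00695 — 4 statements merged into one kernel-verified Lean document; each statement's English description precedes it below -/
import Mathlib

section
/- Gumbel top-k (sampling without replacement): Let s₁,...,s_N be real numbers and G₁,...,G_N i.i.d. standard Gumbel. Let r = (r₁,...,r_N) be the permutation sorting the perturbed values sᵢ + Gᵢ in decreasing order. Then for any permutation σ of {1,...,N}, P(r = σ) = ∏ₜ₌₁^N exp(s_{σ(t)}) / Σ_{j ∉ {σ(1),...,σ(t-1)}} exp(s_j), i.e., r is distributed as an ordered sample without replacement from the categorical distribution with probabilities proportional to exp(sᵢ). -/
/-!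
The perturbed scores `s i + G i` are independent Gumbel variables with locations `s i`.
For independent Gumbel variables `z t` with locations `m t`, induction on the number of
coordinates gives
  `P(z strictly decreasing, all z t < y) = plackettLuce m * exp (-(∑ t, exp (m t)) * exp (-y))`:
conditioning on `z 0 = x`, the other coordinates must be decreasing and below `x`, and the
Gumbel density of `z 0` times `exp (-A * exp (-x))` is `exp (m 0) / (exp (m 0) + A)` times the
derivative of `exp (-(exp (m 0) + A) * exp (-x))`. Letting `y → ∞` gives the theorem.
-/

open MeasureTheory ProbabilityTheory Finset

section Gumbel

open Set Filter Real Topology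

noncomputable def gumbelPDFReal (m x : ℝ) : ℝ := exp (-(x - m) - exp (-(x - m)))

noncomputable def gumbelMeasure (m : ℝ) : Measure ℝ :=
  volume.withDensity fun x => ENNReal.ofReal (gumbelPDFReal m x)

lemma gumbelPDFReal_pos (m x : ℝ) : 0 < gumbelPDFReal m x := exp_pos _

lemma gumbelPDFReal_eq (m x : ℝ) :
    gumbelPDFReal m x = exp m * exp (-x) * exp (-(exp m * exp (-x))) := by
  have h : exp (-(x - m)) = exp m * exp (-x) := by rw [← exp_add]; ring_nf
  rw [gumbelPDFReal, sub_eq_add_neg, exp_add, h]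

lemma hasDerivAt_exp_neg_mul_exp_neg (b x : ℝ) :
    HasDerivAt (fun x => exp (-(b * exp (-x)))) (b * exp (-x) * exp (-(b * exp (-x)))) x := by
  convert (((hasDerivAt_neg x).exp.const_mul b).neg).exp using 1
  · ext y; simp
  · simp only [Pi.neg_apply, mul_neg, mul_one, neg_neg]; ring

lemma mul_exp_neg_mul_exp_neg_le {b : ℝ} (hb : 0 < b) (x : ℝ) :
    b * exp (-x) * exp (-(b * exp (-x))) ≤ 2 / b * exp x := by
  set t := b * exp (-x) with ht
  have htpos : 0 < t := by positivity
  have hquad : t ^ 2 / 2 ≤ exp t := by nlinarith [quadratic_le_exp_of_nonneg htpos.le]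
  calc t * exp (-t) ≤ 2 / t := by
        rw [exp_neg, ← div_eq_mul_inv, div_le_div_iff₀ (exp_pos t) htpos]; nlinarith
    _ = 2 / b * exp x := by rw [ht, exp_neg]; field_simp

lemma integrableOn_Iic_mul_exp_neg_mul_exp_neg {b : ℝ} (hb : 0 < b) (c : ℝ) :
    IntegrableOn (fun x => b * exp (-x) * exp (-(b * exp (-x)))) (Iic c) := by
  refine ((integrableOn_exp_Iic c).const_mul (2 / b)).mono' (by fun_prop) (ae_of_all _ fun x => ?_)
  rw [Real.norm_of_nonneg (by positivity)]
  exact mul_exp_neg_mul_exp_neg_le hb x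

lemma integral_Iic_mul_exp_neg_mul_exp_neg {b : ℝ} (hb : 0 < b) (c : ℝ) :
    ∫ x in Iic c, b * exp (-x) * exp (-(b * exp (-x))) = exp (-(b * exp (-c))) := by
  have hlim : Tendsto (fun x => exp (-(b * exp (-x)))) atBot (𝓝 0) :=
    tendsto_exp_atBot.comp <| tendsto_neg_atTop_atBot.comp <|
      (tendsto_exp_atTop.comp tendsto_neg_atBot_atTop).const_mul_atTop hb
  rw [integral_Iic_of_hasDerivAt_of_tendsto' (fun x _ => hasDerivAt_exp_neg_mul_exp_neg b x)
    (integrableOn_Iic_mul_exp_neg_mul_exp_neg hb c) hlim, sub_zero]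

lemma setLIntegral_Iic_gumbelMeasure {A : ℝ} (hA : 0 ≤ A) (m c : ℝ) :
    ∫⁻ x in Iic c, ENNReal.ofReal (exp (-(A * exp (-x)))) ∂gumbelMeasure m =
      ENNReal.ofReal (exp m / (exp m + A) * exp (-((exp m + A) * exp (-c)))) := by
  have hb : 0 < exp m + A := by positivity
  have hdens : ∀ x, gumbelPDFReal m x * exp (-(A * exp (-x))) =
      exp m / (exp m + A) * ((exp m + A) * exp (-x) * exp (-((exp m + A) * exp (-x)))) := by
    intro x
    rw [gumbelPDFReal_eq, add_mul, neg_add, exp_add]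
    field_simp
  rw [gumbelMeasure, setLIntegral_withDensity_eq_setLIntegral_mul _
    (by unfold gumbelPDFReal; fun_prop) (by fun_prop) measurableSet_Iic]
  have hmul : ∀ x, ENNReal.ofReal (gumbelPDFReal m x) * ENNReal.ofReal (exp (-(A * exp (-x)))) =
      ENNReal.ofReal (exp m / (exp m + A) *
        ((exp m + A) * exp (-x) * exp (-((exp m + A) * exp (-x))))) := fun x => by
    rw [← hdens, ENNReal.ofReal_mul (gumbelPDFReal_pos m x).le]
  simp only [Pi.mul_apply, hmul]
  rw [← ofReal_integral_eq_lintegral_ofReal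
    ((integrableOn_Iic_mul_exp_neg_mul_exp_neg hb c).const_mul _)
    (ae_of_all _ fun x => by positivity), integral_const_mul,
    integral_Iic_mul_exp_neg_mul_exp_neg hb]

lemma gumbelMeasure_Iic (m c : ℝ) :
    gumbelMeasure m (Iic c) = ENNReal.ofReal (exp (-exp (-(c - m)))) := by
  have h := setLIntegral_Iic_gumbelMeasure le_rfl m c
  simp only [zero_mul, neg_zero, exp_zero, ENNReal.ofReal_one, setLIntegral_const, one_mul,
    add_zero, div_self (exp_pos m).ne'] at h
  rw [h, neg_sub, sub_eq_add_neg, exp_add]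

instance (m : ℝ) : IsProbabilityMeasure (gumbelMeasure m) := by
  constructor
  have hlim : Tendsto (fun c => gumbelMeasure m (Iic c)) atTop (𝓝 (ENNReal.ofReal 1)) := by
    simp only [gumbelMeasure_Iic]
    refine ENNReal.tendsto_ofReal ?_
    have h : Tendsto (fun c => -exp (-(c - m))) atTop (𝓝 0) := by
      simpa [← sub_eq_add_neg] using (tendsto_exp_atBot.comp (tendsto_atBot_add_const_left _ m
        tendsto_neg_atTop_atBot)).neg
    exact tendsto_exp_nhds_zero_nhds_one.comp h
  rw [← iUnion_Iic, ← ENNReal.ofReal_one]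
  exact tendsto_nhds_unique (tendsto_measure_iUnion_atTop monotone_Iic) hlim

instance (m : ℝ) : NullSingletonClass (gumbelMeasure m) := by
  unfold gumbelMeasure; infer_instance

lemma map_add_eq_gumbelMeasure {Ω : Type*} [MeasurableSpace Ω] {μ : Measure Ω}
    [IsProbabilityMeasure μ] {X : Ω → ℝ} (hX : Measurable X)
    (hcdf : ∀ x, μ {ω | X ω ≤ x} = ENNReal.ofReal (exp (-exp (-x)))) (m : ℝ) :
    μ.map (fun ω => m + X ω) = gumbelMeasure m := by
  have : IsProbabilityMeasure (μ.map fun ω => m + X ω) :=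
    Measure.isProbabilityMeasure_map (by fun_prop)
  refine Measure.ext_of_Iic _ _ fun c => ?_
  rw [Measure.map_apply (by fun_prop) measurableSet_Iic, gumbelMeasure_Iic, ← hcdf]
  congr 1
  ext ω
  simp [le_sub_iff_add_le']

end Gumbel

lemma Fin.strictAnti_cons {α : Type*} [Preorder α] {n : ℕ} {f : Fin n → α} {a : α} :
    StrictAnti (Fin.cons a f : Fin (n + 1) → α) ↔ (∀ j, f j < a) ∧ StrictAnti f :=
  Fin.liftFun_cons (· > ·)

lemma Fin.strictAnti_cons_and_forall_lt_iff {α : Type*} [Preorder α] {n : ℕ} {f : Fin n → α}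
    {a y : α} :
    (StrictAnti (Fin.cons a f : Fin (n + 1) → α) ∧
        ∀ t, (Fin.cons a f : Fin (n + 1) → α) t < y) ↔
      a < y ∧ StrictAnti f ∧ ∀ t, f t < a := by
  simp only [Fin.strictAnti_cons, Fin.forall_fin_succ, Fin.cons_zero, Fin.cons_succ]
  exact ⟨fun ⟨⟨hlt, hf⟩, hy, _⟩ => ⟨hy, hf, hlt⟩,
    fun ⟨hy, hf, hlt⟩ => ⟨⟨hlt, hf⟩, hy, fun t => (hlt t).trans hy⟩⟩

lemma measurableSet_setOf_strictAnti {ι α : Type*} [Countable ι] [Preorder ι] [LinearOrder α]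
    [TopologicalSpace α] [OrderClosedTopology α] [SecondCountableTopology α]
    [MeasurableSpace α] [OpensMeasurableSpace α] :
    MeasurableSet {f : ι → α | StrictAnti f} := by
  simp only [StrictAnti, Set.ofPred_forall]
  exact .iInter fun a => .iInter fun b => .iInter fun _ =>
    measurableSet_lt (measurable_pi_apply b) (measurable_pi_apply a)

section PlackettLuce

open Real

/-- The probability that sampling without replacement with weights `exp (w i)` draws
`0, 1, …, n - 1` in this order. -/
noncomputable def plackettLuce {n : ℕ} (w : Fin n → ℝ) : ℝ :=
  ∏ t, exp (w t) / ∑ u ∈ Ici t, exp (w u)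

lemma plackettLuce_nonneg {n : ℕ} (w : Fin n → ℝ) : 0 ≤ plackettLuce w :=
  prod_nonneg fun _ _ => by positivity

lemma plackettLuce_succ {n : ℕ} (w : Fin (n + 1) → ℝ) :
    plackettLuce w = exp (w 0) / (∑ t, exp (w t)) * plackettLuce (Fin.tail w) := by
  simp only [plackettLuce, Fin.prod_univ_succ, ← Fin.map_succEmb_Ici, sum_map]
  rw [← bot_eq_zero, Ici_bot]
  rfl

lemma sum_filter_forall_lt_ne_eq_sum_Ici {ι M : Type*} [Fintype ι] [LinearOrder ι]
    [LocallyFiniteOrderTop ι] [AddCommMonoid M] (σ : Equiv.Perm ι) (f : ι → M) (t : ι) :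
    ∑ j ∈ univ.filter (fun j => ∀ t' < t, σ t' ≠ j), f j = ∑ u ∈ Ici t, f (σ u) := by
  refine (sum_congr (ext fun j => ?_) fun _ _ => rfl).trans (sum_map (Ici t) σ.toEmbedding f)
  simp only [mem_filter, mem_univ, true_and, mem_map_equiv, mem_Ici]
  constructor
  · intro h
    by_contra! hlt
    exact h _ hlt (σ.apply_symm_apply j)
  · rintro h t' ht' rfl
    simp only [Equiv.symm_apply_apply] at h
    exact absurd h (not_le.2 ht')

end PlackettLuce

section GumbelRace

open Set Filter Real Topology

lemma pi_gumbelMeasure_strictAnti_lt {n : ℕ} (m : Fin n → ℝ) (y : ℝ) :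
    Measure.pi (fun t => gumbelMeasure (m t)) {z | StrictAnti z ∧ ∀ t, z t < y} =
      ENNReal.ofReal (plackettLuce m * exp (-((∑ t, exp (m t)) * exp (-y)))) := by
  induction n generalizing y with
  | zero => simp [plackettLuce, Subsingleton.strictAnti]
  | succ n ih =>
    set B := {p : ℝ × (Fin n → ℝ) | p.1 < y ∧ StrictAnti p.2 ∧ ∀ t, p.2 t < p.1}
    have hB : MeasurableSet B := by
      simp only [B, Set.ofPred_and, Set.ofPred_forall]
      exact (measurableSet_lt measurable_fst measurable_const).inter
        ((measurableSet_setOf_strictAnti.preimage measurable_snd).inter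
          (.iInter fun t => measurableSet_lt ((measurable_pi_apply t).comp measurable_snd)
            measurable_fst))
    have hpre : (MeasurableEquiv.piFinSuccAbove (fun _ => ℝ) 0).symm ⁻¹'
        {z | StrictAnti z ∧ ∀ t, z t < y} = B := by
      ext ⟨a, f⟩
      simp only [Set.mem_preimage, MeasurableEquiv.piFinSuccAbove_symm_apply,
        Fin.insertNthEquiv_zero]
      exact Fin.strictAnti_cons_and_forall_lt_iff
    have hslice : ∀ a, Measure.pi (fun t => gumbelMeasure (m (Fin.succ t))) (Prod.mk a ⁻¹' B) =
        (Iio y).indicator (fun a => ENNReal.ofReal (plackettLuce (Fin.tail m) *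
          exp (-((∑ t, exp (Fin.tail m t)) * exp (-a))))) a := by
      intro a
      by_cases ha : a < y
      · rw [indicator_of_mem (Set.mem_Iio.2 ha), ← ih]
        congr 1
        ext f
        exact and_iff_right ha
      · rw [indicator_of_notMem (mt Set.mem_Iio.1 ha)]
        simp [B, ha]
    rw [← ((measurePreserving_piFinSuccAbove (fun t => gumbelMeasure (m t)) 0).symm
      ).measure_preimage_equiv, hpre, Measure.prod_apply hB]
    simp only [Fin.succAbove_zero]
    rw [lintegral_congr hslice, lintegral_indicator measurableSet_Iio,
      setLIntegral_congr Iio_ae_eq_Iic,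
      lintegral_congr fun _ => ENNReal.ofReal_mul (plackettLuce_nonneg _),
      lintegral_const_mul' _ _ ENNReal.ofReal_ne_top,
      setLIntegral_Iic_gumbelMeasure (by positivity),
      ← ENNReal.ofReal_mul (plackettLuce_nonneg _), plackettLuce_succ m, Fin.sum_univ_succ]
    congr 1
    simp only [Fin.tail]
    ring

theorem pi_gumbelMeasure_strictAnti {n : ℕ} (m : Fin n → ℝ) :
    Measure.pi (fun t => gumbelMeasure (m t)) {z | StrictAnti z} =
      ENNReal.ofReal (plackettLuce m) := by
  have hunion : {z : Fin n → ℝ | StrictAnti z} =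
      ⋃ y : ℝ, {z | StrictAnti z ∧ ∀ t, z t < y} := by
    ext z
    simp only [mem_ofPred_eq, mem_iUnion]
    obtain ⟨M, hM⟩ := (finite_range z).bddAbove
    exact ⟨fun hz => ⟨M + 1, hz, fun t => (hM ⟨t, rfl⟩).trans_lt (lt_add_one M)⟩,
      fun ⟨_, hz, _⟩ => hz⟩
  have hmono : Monotone fun y : ℝ => {z : Fin n → ℝ | StrictAnti z ∧ ∀ t, z t < y} :=
    fun _ _ hyy' _ hz => ⟨hz.1, fun t => (hz.2 t).trans_le hyy'⟩
  have hexp : Tendsto (fun y => -((∑ t, exp (m t)) * exp (-y))) atTop (𝓝 0) := by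
    simpa using ((tendsto_exp_atBot.comp tendsto_neg_atTop_atBot).const_mul
      (∑ t, exp (m t))).neg
  have hlim := ENNReal.tendsto_ofReal <|
    (tendsto_exp_nhds_zero_nhds_one.comp hexp).const_mul (plackettLuce m)
  rw [mul_one] at hlim
  rw [hunion]
  refine tendsto_nhds_unique (tendsto_measure_iUnion_atTop hmono) ?_
  simpa only [Function.comp_def, pi_gumbelMeasure_strictAnti_lt] using hlim

end GumbelRace

/-- Gumbel top-k / sampling without replacement: the probability that the descending order of
the Gumbel-perturbed scores `s i + G i` is given by the permutation `σ` equals the probability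
of drawing the ordered sequence `σ 0, σ 1, …` without replacement from the categorical
distribution with weights `exp (s i)`. -/
theorem gumbel_topk {Ω : Type*} [MeasurableSpace Ω] (μ : Measure Ω)
    [IsProbabilityMeasure μ] (N : ℕ) (s : Fin N → ℝ) (G : Fin N → Ω → ℝ)
    (hmeas : ∀ i, Measurable (G i))
    (hindep : iIndepFun G μ)
    (hcdf : ∀ i x, μ {ω | G i ω ≤ x} = ENNReal.ofReal (Real.exp (-Real.exp (-x))))
    (σ : Equiv.Perm (Fin N)) :
    μ {ω | ∀ t t' : Fin N, t < t' → s (σ t') + G (σ t') ω < s (σ t) + G (σ t) ω} =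
      ENNReal.ofReal (∏ t : Fin N,
        Real.exp (s (σ t)) /
          ∑ j ∈ Finset.univ.filter (fun j : Fin N => ∀ t' : Fin N, t' < t → σ t' ≠ j),
            Real.exp (s j)) := by
  set Y : Fin N → Ω → ℝ := fun t ω => s (σ t) + G (σ t) ω
  have hY : ∀ t, Measurable (Y t) := fun t => (hmeas _).const_add _
  have hlaw : μ.map (fun ω t => Y t ω) = Measure.pi fun t => gumbelMeasure (s (σ t)) := by
    rw [((hindep.precomp σ.injective).comp (fun t x => s (σ t) + x)
      (fun t => measurable_const_add _)).map_fun_eq_pi_map (fun t => (hY t).aemeasurable)]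
    simp only [Y, map_add_eq_gumbelMeasure (hmeas _) (hcdf _)]
  change μ ((fun ω t => Y t ω) ⁻¹' {z | StrictAnti z}) = _
  rw [← Measure.map_apply (measurable_pi_lambda _ hY) measurableSet_setOf_strictAnti,
    hlaw, pi_gumbelMeasure_strictAnti, plackettLuce]
  congr! 3 with t
  convert (sum_filter_forall_lt_ne_eq_sum_Ici σ (fun j => Real.exp (s j)) t).symm using 3
end

section
/- Order preservation of soft rank: For s ∈ ℝⁿ with ε > 0, let r̃_ε(s) = (ψ₁,...,ψₙ) be the Euclidean projection of -s/ε onto the permutahedron P((1,...,n)). If φ is the permutation sorting s in descending order (s_{φ(1)} ≥ ... ≥ s_{φ(n)}), then ψ_{φ(1)} ≤ ψ_{φ(2)} ≤ ... ≤ ψ_{φ(n)}; i.e., the soft rank preserves the ordering of the hard rank. -/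
/-!
Swapping two coordinates `a, b` of the projection `ψ` of `z` keeps it in the permutahedron, so the
variational inequality `⟪z - ψ, y - ψ⟫ ≤ 0` of the projection applies to the swapped point `y`.
There it evaluates to `(ψ a - ψ b) * (z b - z a) + (ψ a - ψ b) ^ 2`, which is positive when
`z a ≤ z b` but `ψ b < ψ a`. For `z = -s/ε` the order of `z` is the reverse of that of `s`.
-/

/-- The permutahedron generated by `(1, …, n)`, inside Euclidean space `ℝⁿ`. -/
def permutahedron (n : ℕ) : Set (EuclideanSpace ℝ (Fin n)) :=
  convexHull ℝ {x | ∃ σ : Equiv.Perm (Fin n), ∀ i, x i = ((σ i : ℕ) : ℝ) + 1}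

open LinearIsometryEquiv
open scoped InnerProductSpace

theorem permutahedron_piLpCongrLeft_mem {n : ℕ} (τ : Equiv.Perm (Fin n))
    {x : EuclideanSpace ℝ (Fin n)} (hx : x ∈ permutahedron n) :
    piLpCongrLeft 2 ℝ ℝ τ x ∈ permutahedron n := by
  have hmem := Set.mem_image_of_mem (piLpCongrLeft 2 ℝ ℝ τ).toLinearEquiv.toLinearMap hx
  rw [permutahedron, LinearMap.image_convexHull] at hmem
  refine convexHull_mono ?_ hmem
  rintro _ ⟨y, ⟨σ, hσ⟩, rfl⟩
  exact ⟨τ.symm.trans σ, fun i => hσ _⟩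

section Swap

variable {ι : Type*} [Fintype ι] [DecidableEq ι]

theorem piLpCongrLeft_swap_sub_self (v : EuclideanSpace ℝ ι) (a b : ι) :
    piLpCongrLeft 2 ℝ ℝ (Equiv.swap a b) v - v
      = (v b - v a) • (EuclideanSpace.single a 1 - EuclideanSpace.single b 1) := by
  ext i
  simp only [PiLp.sub_apply, PiLp.smul_apply, piLpCongrLeft_apply, Equiv.piCongrLeft'_apply,
    Equiv.symm_swap, Equiv.swap_apply_def, PiLp.single_apply, smul_eq_mul]
  split_ifs <;> simp_all

theorem inner_piLpCongrLeft_swap_sub_self (x v : EuclideanSpace ℝ ι) (a b : ι) :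
    ⟪x, piLpCongrLeft 2 ℝ ℝ (Equiv.swap a b) v - v⟫_ℝ = (v b - v a) * (x a - x b) := by
  simp [piLpCongrLeft_swap_sub_self, inner_smul_right, inner_sub_right,
    EuclideanSpace.inner_single_right]

end Swap

theorem real_inner_sub_le_zero_of_isMinOn {F : Type*} [NormedAddCommGroup F]
    [InnerProductSpace ℝ F] {K : Set F} (hK : Convex ℝ K) {z p : F} (hp : p ∈ K)
    (hmin : IsMinOn (fun y => ‖y - z‖) K p) {y : F} (hy : y ∈ K) :
    ⟪z - p, y - p⟫_ℝ ≤ 0 := by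
  refine (norm_eq_iInf_iff_real_inner_le_zero hK hp).1 ?_ y hy
  have : Nonempty K := ⟨⟨p, hp⟩⟩
  have hbdd : BddBelow (Set.range fun w : K => ‖z - w‖) :=
    ⟨0, by rintro _ ⟨w, rfl⟩; positivity⟩
  refine le_antisymm (le_ciInf fun w => ?_) (ciInf_le hbdd ⟨p, hp⟩)
  rw [norm_sub_rev z, norm_sub_rev z]
  exact isMinOn_iff.1 hmin w w.2

theorem apply_le_apply_of_isMinOn_norm_sub {ι : Type*} [Fintype ι]
    {K : Set (EuclideanSpace ℝ ι)} (hK : Convex ℝ K)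
    (hK_perm : ∀ σ : Equiv.Perm ι, ∀ x ∈ K, piLpCongrLeft 2 ℝ ℝ σ x ∈ K)
    {z p : EuclideanSpace ℝ ι} (hp : p ∈ K) (hmin : IsMinOn (fun y => ‖y - z‖) K p)
    {a b : ι} (hz : z a ≤ z b) : p a ≤ p b := by
  classical
  have hswap := real_inner_sub_le_zero_of_isMinOn hK hp hmin (hK_perm (Equiv.swap a b) p hp)
  rw [inner_piLpCongrLeft_swap_sub_self, PiLp.sub_apply, PiLp.sub_apply] at hswap
  by_contra! hlt
  nlinarith

/-- Order preservation of soft rank: if `ψ` is the Euclidean projection of `-s/ε` onto the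
permutahedron and `φ` sorts `s` in descending order, then the coordinates of `ψ` along `φ`
are increasing; i.e. the soft rank preserves the ordering of the hard rank. -/
theorem softRank_order_preserving (n : ℕ) (s : EuclideanSpace ℝ (Fin n)) (ε : ℝ) (hε : 0 < ε)
    (ψ : EuclideanSpace ℝ (Fin n)) (hψ : ψ ∈ permutahedron n)
    (hproj : ∀ y ∈ permutahedron n, ‖ψ - (-(ε⁻¹ • s))‖ ≤ ‖y - (-(ε⁻¹ • s))‖)
    (φ : Equiv.Perm (Fin n)) (hφ : ∀ i j : Fin n, i ≤ j → s (φ j) ≤ s (φ i)) :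
    ∀ i j : Fin n, i ≤ j → ψ (φ i) ≤ ψ (φ j) := by
  intro i j hij
  refine apply_le_apply_of_isMinOn_norm_sub (convex_convexHull ℝ _)
    (fun σ _ hx => permutahedron_piLpCongrLeft_mem σ hx) hψ (isMinOn_iff.2 hproj) ?_
  simp only [PiLp.neg_apply, PiLp.smul_apply, smul_eq_mul, neg_le_neg_iff]
  exact mul_le_mul_of_nonneg_left (hφ i j hij) (inv_nonneg.2 hε.le)
end

section
/- Convergence of soft rank to hard rank: For s ∈ ℝⁿ with distinct entries, the soft rank r̃_ε(s) = proj_{P(τ)}(-s/ε) converges to rank(s) as ε → 0⁺, where rank(s) is the vector of descending ranks of s. -/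
/-- The descending rank vector of `s`: `rankVec s i` is the position of `s i` in the
descending sort of `s`. -/
noncomputable def rankVec {n : ℕ} (s : EuclideanSpace ℝ (Fin n)) :
    EuclideanSpace ℝ (Fin n) :=
  WithLp.toLp 2 (fun i => ((Finset.univ.filter fun j : Fin n => s i ≤ s j).card : ℝ))

open Filter Topology Set Function

theorem exists_pos_mul_norm_sub_le_of_mem_convexHull {E : Type*} [NormedAddCommGroup E]
    [NormedSpace ℝ E] {V : Set E} (hV : V.Finite) (f : E →ₗ[ℝ] ℝ) {v : E}
    (hv : ∀ x ∈ V, x ≠ v → f v < f x) :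
    ∃ c > 0, ∀ y ∈ convexHull ℝ V, c * ‖y - v‖ ≤ f y - f v := by
  have hsmall : ∀ x ∈ V, ∀ᶠ c in 𝓝[>] (0 : ℝ), c * ‖x - v‖ ≤ f x - f v := by
    intro x hx
    rcases eq_or_ne x v with rfl | hxv
    · simp
    · have hlim : Tendsto (fun c : ℝ => c * ‖x - v‖) (𝓝[>] 0) (𝓝 0) :=
        tendsto_nhdsWithin_of_tendsto_nhds <|
          (continuous_mul_const ‖x - v‖).tendsto' 0 0 (zero_mul _)
      exact (hlim.eventually (gt_mem_nhds (sub_pos.2 (hv x hx hxv)))).mono fun _ => le_of_lt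
  obtain ⟨c, hcV, hc⟩ := (((eventually_all_finite hV).2 hsmall).and self_mem_nhdsWithin).exists
  refine ⟨c, hc, fun y hy => ?_⟩
  have hconv := (((convexOn_dist v convex_univ).smul hc.le).sub
    (f.concaveOn convex_univ)).add_const (f v)
  obtain ⟨x, hx, hyx⟩ := hconv.exists_ge_of_mem_convexHull (subset_univ _) hy
  simp only [Pi.add_apply, Pi.sub_apply, smul_eq_mul, dist_eq_norm] at hyx
  linarith [hcV x hx]

theorem inner_sub_inner_le_of_norm_sub_neg_inv_smul_le {E : Type*} [NormedAddCommGroup E]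
    [InnerProductSpace ℝ E] {s r v : E} {ε : ℝ} (hε : 0 < ε)
    (h : ‖r - -(ε⁻¹ • s)‖ ≤ ‖v - -(ε⁻¹ • s)‖) :
    inner ℝ s r - inner ℝ s v ≤ ε / 2 * ‖v‖ ^ 2 := by
  have hsq := pow_le_pow_left₀ (norm_nonneg _) h 2
  rw [sub_neg_eq_add, sub_neg_eq_add, norm_add_sq_real, norm_add_sq_real, real_inner_smul_right,
    real_inner_smul_right, real_inner_comm s r, real_inner_comm s v] at hsq
  have hscaled : ε⁻¹ * (inner ℝ s r - inner ℝ s v) ≤ ‖v‖ ^ 2 / 2 := by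
    nlinarith [sq_nonneg ‖r‖]
  calc inner ℝ s r - inner ℝ s v = ε * (ε⁻¹ * (inner ℝ s r - inner ℝ s v)) := by
        field_simp
    _ ≤ ε * (‖v‖ ^ 2 / 2) := by gcongr
    _ = ε / 2 * ‖v‖ ^ 2 := by ring

section Permutahedron

variable {n : ℕ}

def permVertex (σ : Equiv.Perm (Fin n)) : EuclideanSpace ℝ (Fin n) :=
  WithLp.toLp 2 fun i => ((σ i : ℕ) : ℝ) + 1

theorem permutahedron_eq_convexHull_range_permVertex (n : ℕ) :
    permutahedron n = convexHull ℝ (range (permVertex (n := n))) := by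
  unfold permutahedron
  congr 1
  ext x
  constructor
  · rintro ⟨σ, hσ⟩
    exact ⟨σ, by ext i; simp [permVertex, hσ]⟩
  · rintro ⟨σ, rfl⟩
    exact ⟨σ, fun i => rfl⟩

theorem exists_antivary_permVertex (s : Fin n → ℝ) : ∃ σ, Antivary s (permVertex σ) := by
  refine ⟨(Tuple.sort s).symm.trans Fin.revPerm, fun i j hij => ?_⟩
  have hsorted : (Tuple.sort s).symm j < (Tuple.sort s).symm i := by
    simpa [permVertex] using hij
  simpa using Tuple.monotone_sort s hsorted.le

theorem rankVec_eq_permVertex {s : EuclideanSpace ℝ (Fin n)} (hs : Injective s)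
    {σ : Equiv.Perm (Fin n)} (hσ : Antivary s (permVertex σ)) : rankVec s = permVertex σ := by
  ext i
  -- for distinct entries, `s i ≤ s j ↔ σ j ≤ σ i`, so the count is `#(Iic (σ i)) = σ i + 1`
  have hfilter :
      (Finset.univ.filter fun j => s i ≤ s j) = (Finset.Iic (σ i)).map σ.symm.toEmbedding := by
    ext j
    simp only [Finset.mem_filter, Finset.mem_univ, true_and, Finset.mem_map_equiv,
      Equiv.symm_symm, Finset.mem_Iic]
    constructor
    · intro hij
      by_contra! hlt
      obtain rfl := hs (le_antisymm hij (hσ (by simpa [permVertex] using hlt)))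
      exact hlt.false
    · intro hji
      rcases hji.lt_or_eq with hlt | heq
      · exact hσ (by simpa [permVertex] using hlt)
      · rw [σ.injective heq]
  simp [rankVec, permVertex, hfilter]

theorem inner_eq_sum_mul (x y : EuclideanSpace ℝ (Fin n)) : inner ℝ x y = ∑ i, x i * y i := by
  simp [PiLp.inner_apply, mul_comm]

theorem inner_rankVec_lt_inner_permVertex {s : EuclideanSpace ℝ (Fin n)} (hs : Injective s)
    {σ : Equiv.Perm (Fin n)} (hσ : permVertex σ ≠ rankVec s) :
    inner ℝ s (rankVec s) < inner ℝ s (permVertex σ) := by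
  obtain ⟨ρ, hρ⟩ := exists_antivary_permVertex s
  have hcomp : ∀ i, permVertex ρ (σ.trans ρ.symm i) = permVertex σ i := by
    simp [permVertex]
  have hlt := (hρ.sum_mul_lt_sum_mul_comp_perm_iff (σ := σ.trans ρ.symm)).2 fun h =>
    hσ (rankVec_eq_permVertex hs (by rwa [comp_def, funext hcomp] at h)).symm
  rw [rankVec_eq_permVertex hs hρ, inner_eq_sum_mul, inner_eq_sum_mul]
  simpa only [smul_eq_mul, hcomp] using hlt

end Permutahedron

/-- Convergence of soft rank to hard rank as `ε → 0⁺`: for `s` with distinct entries, the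
Euclidean projection of `-s/ε` onto the permutahedron converges to `rank s`. -/
theorem softRank_tendsto_rank (n : ℕ) (s : EuclideanSpace ℝ (Fin n))
    (hs : Function.Injective s) (r : ℝ → EuclideanSpace ℝ (Fin n))
    (hr : ∀ ε : ℝ, 0 < ε → r ε ∈ permutahedron n ∧
      ∀ y ∈ permutahedron n, ‖r ε - (-(ε⁻¹ • s))‖ ≤ ‖y - (-(ε⁻¹ • s))‖) :
    Filter.Tendsto r (nhdsWithin 0 (Set.Ioi 0)) (nhds (rankVec s)) := by
  obtain ⟨ρ, hρ⟩ := exists_antivary_permVertex s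
  have hrank : rankVec s ∈ permutahedron n := by
    rw [permutahedron_eq_convexHull_range_permVertex, rankVec_eq_permVertex hs hρ]
    exact subset_convexHull ℝ _ ⟨ρ, rfl⟩
  obtain ⟨c, hc, hsharp⟩ := exists_pos_mul_norm_sub_le_of_mem_convexHull
      (finite_range (permVertex (n := n))) (innerₛₗ ℝ s) (v := rankVec s) <| by
      rintro _ ⟨σ, rfl⟩ hσ
      exact inner_rankVec_lt_inner_permVertex hs hσ
  rw [← permutahedron_eq_convexHull_range_permVertex] at hsharp
  have hbound : ∀ ε > 0, ‖r ε - rankVec s‖ ≤ ε * (‖rankVec s‖ ^ 2 / (2 * c)) := by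
    intro ε hε
    have h := (hsharp _ (hr ε hε).1).trans
      (inner_sub_inner_le_of_norm_sub_neg_inv_smul_le hε ((hr ε hε).2 _ hrank))
    rw [mul_div_assoc', le_div_iff₀ (by positivity)]
    linarith
  rw [tendsto_iff_norm_sub_tendsto_zero]
  refine squeeze_zero' (Eventually.of_forall fun _ => norm_nonneg _)
    (eventually_nhdsWithin_of_forall hbound) ?_
  exact tendsto_nhdsWithin_of_tendsto_nhds <|
    (continuous_mul_const _).tendsto' 0 0 (zero_mul _)
end

section
/- Isotonic regression via block averaging optimality condition: Let z ∈ ℝⁿ and suppose {1,...,n} is partitioned into consecutive blocks B₁,...,B_m. Define v ∈ ℝⁿ by vᵢ = (1/|B_k|)Σ_{j∈B_k} z_j for i ∈ B_k. If the block means are strictly decreasing (mean(B₁) > mean(B₂) > ... > mean(B_m)) and within each block B_k the vector v minimizes Σ_{j∈B_k}(x - z_j)² over constants x, then v is the unique minimizer of ‖v' - z‖² over the set {v' : v'₁ ≥ v'₂ ≥ ... ≥ v'ₙ} provided additionally that for each block B_k and each proper prefix P of B_k, the mean of z over P is at most the mean of z over B_k \ P. -/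
open Finset

/-- The mean of `z` over the set of indices `i` with `lo ≤ i < hi`. -/
noncomputable def intervalMean {n : ℕ} (z : Fin n → ℝ) (lo hi : ℕ) : ℝ :=
  (∑ j ∈ Finset.univ.filter (fun j : Fin n => lo ≤ (j : ℕ) ∧ (j : ℕ) < hi), z j) /
    (((hi - lo : ℕ) : ℝ))

/-! Expanding `‖v' - z‖² = ‖v' - v‖² + 2⟪v' - v, v - z⟫ + ‖v - z‖²`, it suffices that the cross
term is nonnegative for every decreasing `v'`. On a block with mean `μ` the residual `μ - z` sums
to zero and, by the prefix condition, has nonnegative partial sums; Abel summation against the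
decreasing `v'` then makes the contribution of each block nonnegative. -/

theorem mul_sum_le_sum_mul_of_antitoneOn {ι : Type*} [LinearOrder ι] {s : Finset ι}
    {w g : ι → ℝ} (hw : AntitoneOn w s) (hg : ∀ c ∈ s, 0 ≤ ∑ j ∈ s with j ≤ c, g j)
    {y : ℝ} (hy : ∀ j ∈ s, y ≤ w j) :
    y * ∑ j ∈ s, g j ≤ ∑ j ∈ s, w j * g j := by
  classical
  induction s using Finset.induction_on_max generalizing y with
  | empty => simp
  | insert a t hlt ih =>
    have ha : a ∉ t := fun h => (hlt a h).false
    have hwt : ∀ j ∈ t, w a ≤ w j := fun j hj =>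
      hw (mem_insert_of_mem hj) (mem_insert_self a t) (hlt j hj).le
    have hprefix : ∀ c ∈ t, ∑ j ∈ t with j ≤ c, g j = ∑ j ∈ insert a t with j ≤ c, g j :=
      fun c hc => by rw [filter_insert, if_neg (hlt c hc).not_ge]
    have htail := ih (hw.mono (by simp)) (fun c hc => hprefix c hc ▸
      hg c (mem_insert_of_mem hc)) hwt
    have htotal : 0 ≤ ∑ j ∈ insert a t, g j := by
      convert hg a (mem_insert_self a t) using 2
      exact (filter_true_of_mem fun j hj => (mem_insert.1 hj).elim le_of_eq
        fun h => (hlt j h).le).symm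
    rw [sum_insert ha] at htotal
    rw [sum_insert ha, sum_insert ha]
    nlinarith [hy a (mem_insert_self a t)]

theorem sum_mul_nonneg_of_antitoneOn {ι : Type*} [LinearOrder ι] {s : Finset ι}
    {w g : ι → ℝ} (hw : AntitoneOn w s) (hg : ∀ c ∈ s, 0 ≤ ∑ j ∈ s with j ≤ c, g j)
    (hs : ∑ j ∈ s, g j = 0) : 0 ≤ ∑ j ∈ s, w j * g j := by
  obtain ⟨y, hy⟩ := (s.finite_toSet.image w).bddBelow
  simpa [hs] using mul_sum_le_sum_mul_of_antitoneOn hw hg fun j hj => hy ⟨j, hj, rfl⟩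

theorem exists_castSucc_le_and_lt_succ {α : Type*} [LinearOrder α] {m : ℕ}
    (b : Fin (m + 1) → α) {x : α} (h0 : b 0 ≤ x) (hx : x < b (Fin.last m)) :
    ∃ k : Fin m, b k.castSucc ≤ x ∧ x < b k.succ := by
  by_contra! h
  have hall : ∀ k, b k ≤ x := fun k => Fin.induction h0 (fun k hk => h k hk) k
  exact (hall _).not_gt hx

theorem le_of_apply_castSucc_lt_apply_succ {α : Type*} [Preorder α] {m : ℕ}
    {b : Fin (m + 1) → α} (hb : Monotone b) {k l : Fin m} (h : b k.castSucc < b l.succ) :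
    k ≤ l := by
  by_contra! hlk
  exact (h.trans_le (hb (Fin.succ_le_castSucc_iff.2 hlk))).false

def indexIco (n lo hi : ℕ) : Finset (Fin n) :=
  univ.filter fun j : Fin n => lo ≤ (j : ℕ) ∧ (j : ℕ) < hi

section indexIco

variable {n lo c hi : ℕ}

@[simp]
theorem mem_indexIco {j : Fin n} : j ∈ indexIco n lo hi ↔ lo ≤ (j : ℕ) ∧ (j : ℕ) < hi := by
  simp [indexIco]

theorem card_indexIco (h : hi ≤ n) : #(indexIco n lo hi) = hi - lo := by
  have : indexIco n lo hi = (Ico lo hi).attachFin fun j hj => (mem_Ico.1 hj).2.trans_le h := by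
    ext j; simp
  rw [this, card_attachFin, Nat.card_Ico]

theorem sum_indexIco_consecutive {M : Type*} [AddCommMonoid M] (f : Fin n → M)
    (hlc : lo ≤ c) (hch : c ≤ hi) :
    ∑ j ∈ indexIco n lo c, f j + ∑ j ∈ indexIco n c hi, f j = ∑ j ∈ indexIco n lo hi, f j := by
  rw [← sum_filter_add_sum_filter_not (indexIco n lo hi) (fun j => (j : ℕ) < c)]
  congr 2 <;> ext j <;> simp only [mem_indexIco, mem_filter] <;> omega

theorem sum_indexIco_sub_intervalMean (z : Fin n → ℝ) (μ : ℝ) (h : hi ≤ n) :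
    ∑ j ∈ indexIco n lo hi, (μ - z j) = (hi - lo : ℕ) * (μ - intervalMean z lo hi) := by
  rcases eq_or_ne (hi - lo) 0 with hempty | hne
  · have : indexIco n lo hi = ∅ := card_eq_zero.1 (by rw [card_indexIco h, hempty])
    simp [this, hempty]
  · rw [sum_sub_distrib, sum_const, card_indexIco h, nsmul_eq_mul, mul_sub, intervalMean,
      mul_div_cancel₀ _ (by exact_mod_cast hne)]
    rfl

theorem intervalMean_le_of_le_intervalMean (z : Fin n → ℝ) (hlc : lo < c) (hch : c < hi) (hhi : hi ≤ n)
    (h : intervalMean z lo c ≤ intervalMean z c hi) :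
    intervalMean z lo c ≤ intervalMean z lo hi := by
  have hsplit := sum_indexIco_consecutive (fun j => intervalMean z lo c - z j) hlc.le hch.le
  simp only [sum_indexIco_sub_intervalMean _ _ hhi,
    sum_indexIco_sub_intervalMean _ _ (hch.le.trans hhi), sub_self, mul_zero, zero_add] at hsplit
  have hpos : (0 : ℝ) < (hi - lo : ℕ) := by exact_mod_cast Nat.sub_pos_of_lt (hlc.trans hch)
  have hrest : ((hi - c : ℕ) : ℝ) * (intervalMean z lo c - intervalMean z c hi) ≤ 0 :=
    mul_nonpos_of_nonneg_of_nonpos (Nat.cast_nonneg _) (sub_nonpos.2 h)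
  nlinarith

theorem sum_sub_mul_sub_intervalMean_nonneg {z v w : Fin n → ℝ} (hhi : hi ≤ n)
    (hprefix : ∀ c, lo < c → c < hi → intervalMean z lo c ≤ intervalMean z c hi)
    (hw : AntitoneOn w (indexIco n lo hi))
    (hv : ∀ j ∈ indexIco n lo hi, v j = intervalMean z lo hi) :
    0 ≤ ∑ j ∈ indexIco n lo hi, (w j - v j) * (v j - z j) := by
  set μ := intervalMean z lo hi
  have htotal : ∑ j ∈ indexIco n lo hi, (μ - z j) = 0 := by
    rw [sum_indexIco_sub_intervalMean z μ hhi, sub_self, mul_zero]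
  have hprefix_nonneg : ∀ c ∈ indexIco n lo hi,
      0 ≤ ∑ j ∈ indexIco n lo hi with j ≤ c, (μ - z j) := by
    intro c hc
    rw [mem_indexIco] at hc
    have hfilter : (indexIco n lo hi).filter (· ≤ c) = indexIco n lo (c + 1) := by
      ext j; simp only [mem_filter, mem_indexIco, Fin.le_def]; omega
    rw [hfilter, sum_indexIco_sub_intervalMean (hi := c + 1) z μ c.isLt]
    rcases (show (c : ℕ) + 1 ≤ hi from hc.2).lt_or_eq with hlt | heq
    · exact mul_nonneg (Nat.cast_nonneg _) (sub_nonneg.2 <|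
        intervalMean_le_of_le_intervalMean z (by omega) hlt hhi (hprefix _ (by omega) hlt))
    · rw [heq, sub_self, mul_zero]
  have hcross : ∀ j ∈ indexIco n lo hi,
      (w j - v j) * (v j - z j) = w j * (μ - z j) - μ * (μ - z j) := fun j hj => by
    rw [hv j hj]; ring
  rw [sum_congr rfl hcross, sum_sub_distrib, ← mul_sum, htotal, mul_zero, sub_zero]
  exact sum_mul_nonneg_of_antitoneOn hw hprefix_nonneg htotal

theorem exists_mem_indexIco {m : ℕ} {b : Fin (m + 1) → ℕ} (hb0 : b 0 = 0)
    (hbn : b (Fin.last m) = n) (i : Fin n) :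
    ∃ k : Fin m, i ∈ indexIco n (b k.castSucc) (b k.succ) := by
  simpa using exists_castSucc_le_and_lt_succ b (by rw [hb0]; exact i.val.zero_le)
    (by rw [hbn]; exact i.isLt)

theorem sum_eq_sum_sum_indexIco {M : Type*} [AddCommMonoid M] {m : ℕ} {b : Fin (m + 1) → ℕ}
    (hb : Monotone b) (hb0 : b 0 = 0) (hbn : b (Fin.last m) = n) (f : Fin n → M) :
    ∑ i, f i = ∑ k : Fin m, ∑ i ∈ indexIco n (b k.castSucc) (b k.succ), f i := by
  choose blk hblk using exists_mem_indexIco hb0 hbn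
  rw [← sum_fiberwise univ blk f]
  refine sum_congr rfl fun k _ => sum_congr (ext fun i => ?_) fun _ _ => rfl
  simp only [mem_filter, mem_univ, true_and]
  refine ⟨fun h => h ▸ hblk i, fun hi => ?_⟩
  have hi' := hblk i
  rw [mem_indexIco] at hi hi'
  exact le_antisymm (le_of_apply_castSucc_lt_apply_succ hb (by omega))
    (le_of_apply_castSucc_lt_apply_succ hb (by omega))

end indexIco

theorem sum_sq_sub_lt_of_sum_mul_nonneg {ι : Type*} [Fintype ι] {z v w : ι → ℝ}
    (hcross : 0 ≤ ∑ i, (w i - v i) * (v i - z i)) (hne : w ≠ v) :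
    ∑ i, (v i - z i) ^ 2 < ∑ i, (w i - z i) ^ 2 := by
  obtain ⟨i, hi⟩ := Function.ne_iff.1 hne
  have hdist : 0 < ∑ i, (w i - v i) ^ 2 :=
    sum_pos' (fun i _ => sq_nonneg _) ⟨i, mem_univ i, sq_pos_of_ne_zero (sub_ne_zero.2 hi)⟩
  have hexpand : ∑ i, (w i - z i) ^ 2
      = ∑ i, (w i - v i) ^ 2 + 2 * ∑ i, (w i - v i) * (v i - z i) + ∑ i, (v i - z i) ^ 2 := by
    rw [mul_sum, ← sum_add_distrib, ← sum_add_distrib]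
    exact sum_congr rfl fun i _ => by ring
  linarith

theorem isotonic_block_averaging_general {n m : ℕ} (z v : Fin n → ℝ)
    (b : Fin (m + 1) → ℕ) (hb0 : b 0 = 0) (hbn : b (Fin.last m) = n) (hmono : StrictMono b)
    (hv : ∀ k : Fin m, ∀ i : Fin n, b k.castSucc ≤ (i : ℕ) → (i : ℕ) < b k.succ →
      v i = intervalMean z (b k.castSucc) (b k.succ))
    (hdec : ∀ k l : Fin m, k < l →
      intervalMean z (b l.castSucc) (b l.succ) < intervalMean z (b k.castSucc) (b k.succ))
    (hprefix : ∀ k : Fin m, ∀ c : ℕ, b k.castSucc < c → c < b k.succ →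
      intervalMean z (b k.castSucc) c ≤ intervalMean z c (b k.succ)) :
    (∀ i j : Fin n, i ≤ j → v j ≤ v i) ∧
      ∀ v' : Fin n → ℝ, (∀ i j : Fin n, i ≤ j → v' j ≤ v' i) → v' ≠ v →
        ∑ i, (v i - z i) ^ 2 < ∑ i, (v' i - z i) ^ 2 := by
  have hblock (i : Fin n) : ∃ k : Fin m, b k.castSucc ≤ i ∧ (i : ℕ) < b k.succ := by
    simpa using exists_mem_indexIco hb0 hbn i
  refine ⟨fun i j hij => ?_, fun v' hv' hne => sum_sq_sub_lt_of_sum_mul_nonneg ?_ hne⟩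
  · obtain ⟨k, hik⟩ := hblock i
    obtain ⟨l, hjl⟩ := hblock j
    have hkl : k ≤ l := le_of_apply_castSucc_lt_apply_succ hmono.monotone
      (by have : (i : ℕ) ≤ j := hij; omega)
    rw [hv k i hik.1 hik.2, hv l j hjl.1 hjl.2]
    exact hkl.eq_or_lt.elim (fun h => h ▸ le_rfl) fun h => (hdec k l h).le
  · rw [sum_eq_sum_sum_indexIco hmono.monotone hb0 hbn]
    exact sum_nonneg fun k _ => sum_sub_mul_sub_intervalMean_nonneg
      (hbn ▸ hmono.monotone (Fin.le_last _)) (hprefix k)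
      (fun i _ j _ hij => hv' i j hij) fun j hj => hv k j (mem_indexIco.1 hj).1 (mem_indexIco.1 hj).2

/-- Isotonic regression via block averaging (PAV optimality): if `v` is piecewise constant on
consecutive blocks `[b k, b (k+1))` with value the block mean of `z`, the block means are
strictly decreasing, `v` minimizes the within-block squared error among constants, and every
proper prefix of each block has mean at most the mean of the rest of the block, then `v` is
the unique minimizer of `‖v' - z‖²` over decreasing vectors `v'`. -/
theorem isotonic_block_averaging {n m : ℕ} (z v : Fin n → ℝ)
    (b : Fin (m + 1) → ℕ) (hb0 : b 0 = 0) (hbn : b (Fin.last m) = n) (hmono : StrictMono b)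
    (hv : ∀ k : Fin m, ∀ i : Fin n, b k.castSucc ≤ (i : ℕ) → (i : ℕ) < b k.succ →
      v i = intervalMean z (b k.castSucc) (b k.succ))
    (hdec : ∀ k l : Fin m, k < l →
      intervalMean z (b l.castSucc) (b l.succ) < intervalMean z (b k.castSucc) (b k.succ))
    (hmin : ∀ k : Fin m, ∀ i : Fin n, b k.castSucc ≤ (i : ℕ) → (i : ℕ) < b k.succ →
      ∀ x : ℝ,
        ∑ j ∈ Finset.univ.filter
            (fun j : Fin n => b k.castSucc ≤ (j : ℕ) ∧ (j : ℕ) < b k.succ), (v i - z j) ^ 2 ≤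
          ∑ j ∈ Finset.univ.filter
            (fun j : Fin n => b k.castSucc ≤ (j : ℕ) ∧ (j : ℕ) < b k.succ), (x - z j) ^ 2)
    (hprefix : ∀ k : Fin m, ∀ c : ℕ, b k.castSucc < c → c < b k.succ →
      intervalMean z (b k.castSucc) c ≤ intervalMean z c (b k.succ)) :
    (∀ i j : Fin n, i ≤ j → v j ≤ v i) ∧
      ∀ v' : Fin n → ℝ, (∀ i j : Fin n, i ≤ j → v' j ≤ v' i) → v' ≠ v →
        ∑ i, (v i - z i) ^ 2 < ∑ i, (v' i - z i) ^ 2 :=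
  isotonic_block_averaging_general z v b hb0 hbn hmono hv hdec hprefix
end
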